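/- arXiv:1704.03606 — 2 statements merged into one kernel-verified Lean document; each statement's English description precedes it below -/
import Mathlib

section
/- Suppose X ∼ Bernoulli(p) with p ∈ [1/2, 1), P_{Y|X} = BIBO(α,β) with α, β ∈ [0, 1/2), and ᾱp̄ > βp. Then perfect privacy yields nontrivial utility, i.e. h(P_{XY}, p) > max{q, 1−q} (equivalently g^∞(P_{XY}, 0) > 0), if and only if αᾱp̄² < ββ̄p² and p ∈ (1/2, 1). -/
noncomputable section

/-- A row-stochastic matrix (channel) from an `n`-ary input to a `k`-ary output. -/
def IsStoch {n k : ℕ} (F : Fin n → Fin k → ℝ) : Prop :=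
  (∀ y z, 0 ≤ F y z) ∧ ∀ y, ∑ z, F y z = 1

/-- A joint pmf on `{1,…,m} × {1,…,n}`. -/
def IsPmf {m n : ℕ} (P : Fin m → Fin n → ℝ) : Prop :=
  (∀ x y, 0 ≤ P x y) ∧ ∑ x, ∑ y, P x y = 1

/-- `P_c(X) = max_x P_X(x)`. -/
def pcX {m n : ℕ} (P : Fin m → Fin n → ℝ) : ℝ := ⨆ x, ∑ y, P x y

/-- `P_c(Y) = max_y P_Y(y)`. -/
def pcY {m n : ℕ} (P : Fin m → Fin n → ℝ) : ℝ := ⨆ y, ∑ x, P x y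

/-- `P_c(X|Y) = Σ_y max_x P_{XY}(x,y)`. -/
def pcXgY {m n : ℕ} (P : Fin m → Fin n → ℝ) : ℝ := ∑ y, ⨆ x, P x y

/-- `𝒫(F) = P_c(X|Z) = Σ_z max_x Σ_y P_{XY}(x,y) F(y,z)` for a filter `F = P_{Z|Y}`
under the Markov chain `X – Y – Z`. -/
def privP {m n k : ℕ} (P : Fin m → Fin n → ℝ) (F : Fin n → Fin k → ℝ) : ℝ :=
  ∑ z, ⨆ x, ∑ y, P x y * F y z

/-- `𝒰(F) = P_c(Y|Z) = Σ_z max_y P_Y(y) F(y,z)` for a filter `F = P_{Z|Y}`. -/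
def privU {m n k : ℕ} (P : Fin m → Fin n → ℝ) (F : Fin n → Fin k → ℝ) : ℝ :=
  ∑ z, ⨆ y, (∑ x, P x y) * F y z

/-- The set `ℱ` of privacy filters: `n × (n+1)` row-stochastic matrices. -/
def filtSet (n : ℕ) : Set (Fin n → Fin (n + 1) → ℝ) := {F | IsStoch F}

/-- The privacy-aware guessing function
`h(P_{XY}, ε) = max { 𝒰(F) : F ∈ ℱ, 𝒫(F) ≤ ε }`. -/
def hFun {m n : ℕ} (P : Fin m → Fin n → ℝ) (ε : ℝ) : ℝ :=
  sSup {u | ∃ F ∈ filtSet n, privP P F ≤ ε ∧ privU P F = u}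

/-- The joint pmf of `(X, Y)` when `X ∼ Bernoulli(p)` (i.e. `P(X=1) = p`) and
`P_{Y|X} = BIBO(α, β)`, i.e. `P(Y=1|X=0) = α` and `P(Y=0|X=1) = β`. -/
def binJoint (p α β : ℝ) : Fin 2 → Fin 2 → ℝ := fun x y =>
  if x = 0 then (if y = 0 then (1 - p) * (1 - α) else (1 - p) * α)
  else (if y = 0 then p * β else p * (1 - β))

lemma csup2 (f : Fin 2 → ℝ) : (⨆ x, f x) = max (f 0) (f 1) := by
  apply le_antisymm
  · refine ciSup_le fun x => ?_
    fin_cases x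
    · exact le_max_left _ _
    · exact le_max_right _ _
  · exact max_le (le_ciSup (Set.finite_range f).bddAbove 0)
      (le_ciSup (Set.finite_range f).bddAbove 1)

lemma privU_bin (p α β : ℝ) (F : Fin 2 → Fin 3 → ℝ) :
    privU (binJoint p α β) F =
      max (((1-p)*(1-α)+p*β) * F 0 0) (((1-p)*α+p*(1-β)) * F 1 0) +
      max (((1-p)*(1-α)+p*β) * F 0 1) (((1-p)*α+p*(1-β)) * F 1 1) +
      max (((1-p)*(1-α)+p*β) * F 0 2) (((1-p)*α+p*(1-β)) * F 1 2) := by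
  simp [privU, Fin.sum_univ_two, Fin.sum_univ_three, csup2, binJoint]

lemma privP_bin (p α β : ℝ) (F : Fin 2 → Fin 3 → ℝ) :
    privP (binJoint p α β) F =
      max ((1-p)*(1-α) * F 0 0 + (1-p)*α * F 1 0) (p*β * F 0 0 + p*(1-β) * F 1 0) +
      max ((1-p)*(1-α) * F 0 1 + (1-p)*α * F 1 1) (p*β * F 0 1 + p*(1-β) * F 1 1) +
      max ((1-p)*(1-α) * F 0 2 + (1-p)*α * F 1 2) (p*β * F 0 2 + p*(1-β) * F 1 2) := by
  simp [privP, Fin.sum_univ_two, Fin.sum_univ_three, csup2, binJoint]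

/-- per-letter bound: if `c*u ≤ d*v`, `(A)*d - B*c ≤ M*d`, then `max (A*u) (B*v) ≤ B*v + M*u`. -/
lemma perz {A B c d M u v : ℝ} (hd : 0 < d) (hB : 0 ≤ B) (hu : 0 ≤ u)
    (hK : A*d - B*c ≤ M*d) (hpriv : c*u ≤ d*v) (hM : 0 ≤ M) :
    max (A*u) (B*v) ≤ B*v + M*u := by
  apply max_le
  · have h1 : B*(c*u) ≤ B*(d*v) := mul_le_mul_of_nonneg_left hpriv hB
    have h2 : (A*d - B*c)*u ≤ (M*d)*u := mul_le_mul_of_nonneg_right hK hu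
    have h3 : d*(A*u) ≤ d*(B*v + M*u) := by nlinarith
    exact le_of_mul_le_mul_left h3 hd
  · nlinarith [mul_nonneg hM hu]

set_option maxHeartbeats 1000000 in
/-- Upper bound on utility under perfect privacy, failing the condition.  -/
lemma privU_le_max (p α β : ℝ)
    (hp : p ∈ Set.Ico (1 / 2 : ℝ) 1)
    (hα : α ∈ Set.Ico (0 : ℝ) (1 / 2)) (hβ : β ∈ Set.Ico (0 : ℝ) (1 / 2))
    (hnd : (1 - α) * (1 - p) > β * p)
    (hcond : ¬(α * (1 - α) * (1 - p) ^ 2 < β * (1 - β) * p ^ 2 ∧ 1 / 2 < p))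
    (F : Fin 2 → Fin 3 → ℝ) (hF : IsStoch F)
    (hP : privP (binJoint p α β) F ≤ p) :
    privU (binJoint p α β) F ≤
      max (α * (1 - p) + (1 - β) * p) (1 - (α * (1 - p) + (1 - β) * p)) := by
  obtain ⟨hp1, hp2⟩ := hp
  obtain ⟨hα0, hα1⟩ := hα
  obtain ⟨hβ0, hβ1⟩ := hβ
  obtain ⟨hFnn, hFsum⟩ := hF
  have ha : F 0 0 + F 0 1 + F 0 2 = 1 := by
    have := hFsum 0; rwa [Fin.sum_univ_three] at this
  have hb : F 1 0 + F 1 1 + F 1 2 = 1 := by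
    have := hFsum 1; rwa [Fin.sum_univ_three] at this
  set c : ℝ := (1-α)*(1-p) - β*p with hcdef
  set d : ℝ := (1-β)*p - α*(1-p) with hddef
  have hc : 0 < c := by rw [hcdef]; linarith
  have hd : 0 < d := by rw [hddef]; linarith
  -- privacy constraint per letter
  rw [privP_bin] at hP
  have m0 := le_max_right ((1-p)*(1-α) * F 0 0 + (1-p)*α * F 1 0) (p*β * F 0 0 + p*(1-β) * F 1 0)
  have m1 := le_max_right ((1-p)*(1-α) * F 0 1 + (1-p)*α * F 1 1) (p*β * F 0 1 + p*(1-β) * F 1 1)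
  have m2 := le_max_right ((1-p)*(1-α) * F 0 2 + (1-p)*α * F 1 2) (p*β * F 0 2 + p*(1-β) * F 1 2)
  have l0 := le_max_left ((1-p)*(1-α) * F 0 0 + (1-p)*α * F 1 0) (p*β * F 0 0 + p*(1-β) * F 1 0)
  have l1 := le_max_left ((1-p)*(1-α) * F 0 1 + (1-p)*α * F 1 1) (p*β * F 0 1 + p*(1-β) * F 1 1)
  have l2 := le_max_left ((1-p)*(1-α) * F 0 2 + (1-p)*α * F 1 2) (p*β * F 0 2 + p*(1-β) * F 1 2)
  have hsum : (p*β * F 0 0 + p*(1-β) * F 1 0) + (p*β * F 0 1 + p*(1-β) * F 1 1)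
      + (p*β * F 0 2 + p*(1-β) * F 1 2) = p := by linear_combination (p*β)*ha + (p*(1-β))*hb
  have pc0 : c * F 0 0 ≤ d * F 1 0 := by
    rw [hcdef, hddef]; linarith [hP, m1, m2, l0, hsum]
  have pc1 : c * F 0 1 ≤ d * F 1 1 := by
    rw [hcdef, hddef]; linarith [hP, m0, m2, l1, hsum]
  have pc2 : c * F 0 2 ≤ d * F 1 2 := by
    rw [hcdef, hddef]; linarith [hP, m0, m1, l2, hsum]
  clear hP m0 m1 m2 l0 l1 l2 hsum
  -- notation
  set q : ℝ := α * (1 - p) + (1 - β) * p with hqdef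
  set M : ℝ := max 0 (1 - 2*q) with hMdef
  have hM0 : 0 ≤ M := le_max_left _ _
  have hq0 : 0 ≤ q := by rw [hqdef]; nlinarith
  -- key inequality K ≤ M*d
  have hA : (1-p)*(1-α)+p*β = 1 - q := by rw [hqdef]; ring
  have hB : (1-p)*α+p*(1-β) = q := by rw [hqdef]; ring
  have hKid : (1-q)*d - q*c = 2*(β*(1-β)*p^2 - α*(1-α)*(1-p)^2) := by
    rw [hqdef, hcdef, hddef]; ring
  have hKM : (1-q)*d - q*c ≤ M*d := by
    push_neg at hcond
    rcases lt_or_ge (α * (1 - α) * (1 - p) ^ 2) (β * (1 - β) * p ^ 2) with hlt | hge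
    · have hp12 : p = 1/2 := le_antisymm (hcond hlt) hp1
      have hcd : c = d := by rw [hcdef, hddef, hp12]; ring
      have h1 : (1 - 2*q) * d ≤ M * d :=
        mul_le_mul_of_nonneg_right (le_max_right _ _) hd.le
      rw [hcd]; linarith only [h1]
    · have h0 : (0:ℝ) ≤ M * d := mul_nonneg hM0 hd.le
      linarith [hKid, hge]
  -- per-letter utility bounds
  rw [privU_bin, hA, hB]
  have u0 := perz hd hq0 (hFnn 0 0) hKM pc0 hM0
  have u1 := perz hd hq0 (hFnn 0 1) hKM pc1 hM0
  have u2 := perz hd hq0 (hFnn 0 2) hKM pc2 hM0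
  have htot : q * F 1 0 + M * F 0 0 + (q * F 1 1 + M * F 0 1) + (q * F 1 2 + M * F 0 2)
      = q + M := by linear_combination q*hb + M*ha
  have hfin : q + M = max q (1 - q) := by
    rcases le_total (1 - 2*q) 0 with h | h
    · rw [hMdef, max_eq_left h, max_eq_left (by linarith)]; ring
    · rw [hMdef, max_eq_right h, max_eq_right (by linarith)]; ring
  linarith [u0, u1, u2]


set_option maxHeartbeats 1000000 in
/-- Nontrivial utility under perfect privacy in the binary case: with
`X ∼ Bernoulli(p)`, `p ∈ [1/2, 1)`, `P_{Y|X} = BIBO(α,β)`, `α, β ∈ [0, 1/2)` and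
`ᾱ p̄ > β p`, one has `h(P_{XY}, p) > max{q, 1-q}` (i.e. `g^∞(P_{XY}, 0) > 0`) if and
only if `α ᾱ p̄² < β β̄ p²` and `p ∈ (1/2, 1)`, where `q = α p̄ + β̄ p = P(Y=1)`. -/
theorem perfect_privacy_nontrivial_iff (p α β : ℝ)
    (hp : p ∈ Set.Ico (1 / 2 : ℝ) 1)
    (hα : α ∈ Set.Ico (0 : ℝ) (1 / 2)) (hβ : β ∈ Set.Ico (0 : ℝ) (1 / 2))
    (hnd : (1 - α) * (1 - p) > β * p) :
    hFun (binJoint p α β) p >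
        max (α * (1 - p) + (1 - β) * p) (1 - (α * (1 - p) + (1 - β) * p)) ↔
      α * (1 - α) * (1 - p) ^ 2 < β * (1 - β) * p ^ 2 ∧ 1 / 2 < p := by
  obtain ⟨hp1, hp2⟩ := hp
  obtain ⟨hα0, hα1⟩ := hα
  obtain ⟨hβ0, hβ1⟩ := hβ
  have hq0 : (0:ℝ) < α * (1 - p) + (1 - β) * p := by nlinarith
  have hA0 : (0:ℝ) ≤ (1-p)*(1-α)+p*β := by nlinarith
  have hB0 : (0:ℝ) < (1-p)*α+p*(1-β) := by nlinarith
  -- boundedness of the feasible-utility set by 1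
  have hbdd : ∀ u ∈ {u | ∃ F ∈ filtSet 2,
      privP (binJoint p α β) F ≤ p ∧ privU (binJoint p α β) F = u}, u ≤ 1 := by
    rintro u ⟨F, hFm, -, rfl⟩
    obtain ⟨hFnn, hFsum⟩ := hFm
    have ha : F 0 0 + F 0 1 + F 0 2 = 1 := by
      have := hFsum 0; rwa [Fin.sum_univ_three] at this
    have hb : F 1 0 + F 1 1 + F 1 2 = 1 := by
      have := hFsum 1; rwa [Fin.sum_univ_three] at this
    rw [privU_bin]
    have b0 : max (((1-p)*(1-α)+p*β) * F 0 0) (((1-p)*α+p*(1-β)) * F 1 0)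
        ≤ ((1-p)*(1-α)+p*β) * F 0 0 + ((1-p)*α+p*(1-β)) * F 1 0 :=
      max_le (le_add_of_nonneg_right (mul_nonneg hB0.le (hFnn 1 0)))
        (le_add_of_nonneg_left (mul_nonneg hA0 (hFnn 0 0)))
    have b1 : max (((1-p)*(1-α)+p*β) * F 0 1) (((1-p)*α+p*(1-β)) * F 1 1)
        ≤ ((1-p)*(1-α)+p*β) * F 0 1 + ((1-p)*α+p*(1-β)) * F 1 1 :=
      max_le (le_add_of_nonneg_right (mul_nonneg hB0.le (hFnn 1 1)))
        (le_add_of_nonneg_left (mul_nonneg hA0 (hFnn 0 1)))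
    have b2 : max (((1-p)*(1-α)+p*β) * F 0 2) (((1-p)*α+p*(1-β)) * F 1 2)
        ≤ ((1-p)*(1-α)+p*β) * F 0 2 + ((1-p)*α+p*(1-β)) * F 1 2 :=
      max_le (le_add_of_nonneg_right (mul_nonneg hB0.le (hFnn 1 2)))
        (le_add_of_nonneg_left (mul_nonneg hA0 (hFnn 0 2)))
    have hsum : ((1-p)*(1-α)+p*β) * F 0 0 + ((1-p)*α+p*(1-β)) * F 1 0
        + (((1-p)*(1-α)+p*β) * F 0 1 + ((1-p)*α+p*(1-β)) * F 1 1)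
        + (((1-p)*(1-α)+p*β) * F 0 2 + ((1-p)*α+p*(1-β)) * F 1 2) = 1 := by
      linear_combination ((1-p)*(1-α)+p*β) * ha + ((1-p)*α+p*(1-β)) * hb
    linarith only [b0, b1, b2, hsum]
  constructor
  · intro hgt
    by_contra hcond
    have hub : hFun (binJoint p α β) p
        ≤ max (α * (1 - p) + (1 - β) * p) (1 - (α * (1 - p) + (1 - β) * p)) := by
      apply Real.sSup_le
      · rintro u ⟨F, hFm, hPle, rfl⟩
        exact privU_le_max p α β ⟨hp1, hp2⟩ ⟨hα0, hα1⟩ ⟨hβ0, hβ1⟩ hnd hcond F hFm hPle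
      · exact le_trans hq0.le (le_max_left _ _)
    exact absurd hgt (not_lt.mpr hub)
  · rintro ⟨hlt, hp12⟩
    set c : ℝ := (1-α)*(1-p) - β*p with hcdef
    set d : ℝ := (1-β)*p - α*(1-p) with hddef
    have hc : 0 < c := by rw [hcdef]; linarith
    have hd : 0 < d := by rw [hddef]; linarith
    have hcd : c < d := by rw [hcdef, hddef]; linarith
    have hcd1 : c / d ≤ 1 := (div_le_one hd).mpr hcd.le
    have hcd0 : 0 ≤ c / d := div_nonneg hc.le hd.le
    set F₀ : Fin 2 → Fin 3 → ℝ := fun y z =>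
      if y = 0 then (if z = 0 then (1:ℝ) else 0)
      else (if z = 0 then c/d else if z = 1 then 1 - c/d else 0) with hF₀def
    have e00 : F₀ 0 0 = 1 := rfl
    have e01 : F₀ 0 1 = 0 := rfl
    have e02 : F₀ 0 2 = 0 := rfl
    have e10 : F₀ 1 0 = c/d := rfl
    have e11 : F₀ 1 1 = 1 - c/d := rfl
    have e12 : F₀ 1 2 = 0 := rfl
    have hstoch : IsStoch F₀ := by
      constructor
      · intro y z
        fin_cases y <;> fin_cases z <;>
          simp [e00, e01, e02, e10, e11, e12] <;> [skip; skip] <;> linarith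
      · intro y
        fin_cases y <;> rw [Fin.sum_univ_three] <;>
          simp [e00, e01, e02, e10, e11, e12] <;> ring
    -- privacy of F₀
    have hPle : privP (binJoint p α β) F₀ ≤ p := by
      rw [privP_bin, e00, e01, e02, e10, e11, e12]
      have hz0 : (1-p)*(1-α) * 1 + (1-p)*α * (c/d) = p*β * 1 + p*(1-β) * (c/d) := by
        have hdne : d ≠ 0 := hd.ne'; field_simp; rw [hcdef, hddef]; ring
      have hz1 : (1-p)*(1-α) * 0 + (1-p)*α * (1 - c/d) ≤ p*β * 0 + p*(1-β) * (1 - c/d) := by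
        have : (1-p)*α ≤ p*(1-β) := by linarith [hd]
        nlinarith [this, sub_nonneg.mpr hcd1]
      have hz2 : (1-p)*(1-α) * 0 + (1-p)*α * 0 ≤ p*β * 0 + p*(1-β) * 0 := by norm_num
      rw [max_eq_right hz0.le, max_eq_right hz1, max_eq_right hz2]
      have : p*β * 1 + p*(1-β) * (c/d) + (p*β * 0 + p*(1-β) * (1 - c/d))
          + (p*β * 0 + p*(1-β) * 0) = p := by ring
      linarith [this]
    -- utility of F₀
    have hUval : privU (binJoint p α β) F₀
        = ((1-p)*(1-α)+p*β) + ((1-p)*α+p*(1-β)) * (1 - c/d) := by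
      rw [privU_bin, e00, e01, e02, e10, e11, e12]
      have k0 : ((1-p)*α+p*(1-β)) * (c/d) ≤ ((1-p)*(1-α)+p*β) * 1 := by
        rw [mul_one, ← mul_div_assoc, div_le_iff₀ hd]
        rw [hcdef, hddef]; nlinarith
      have k1 : ((1-p)*(1-α)+p*β) * 0 ≤ ((1-p)*α+p*(1-β)) * (1 - c/d) := by
        rw [mul_zero]
        exact mul_nonneg hB0.le (by linarith)
      rw [max_eq_left k0, max_eq_right k1, mul_one, mul_zero, mul_zero, max_self]
      ring
    have hmem : privU (binJoint p α β) F₀ ∈ {u | ∃ F ∈ filtSet 2,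
        privP (binJoint p α β) F ≤ p ∧ privU (binJoint p α β) F = u} :=
      ⟨F₀, hstoch, hPle, rfl⟩
    have hle : privU (binJoint p α β) F₀ ≤ hFun (binJoint p α β) p :=
      le_csSup ⟨1, fun u hu => hbdd u hu⟩ hmem
    have hstrict : max (α * (1 - p) + (1 - β) * p) (1 - (α * (1 - p) + (1 - β) * p))
        < privU (binJoint p α β) F₀ := by
      rw [hUval]
      apply max_lt
      · -- q < A + B(1 - c/d), i.e. B c/d < A
        have h1 : ((1-p)*α+p*(1-β)) * (c/d) < (1-p)*(1-α)+p*β := by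
          rw [← mul_div_assoc, div_lt_iff₀ hd]
          rw [hcdef, hddef]; nlinarith
        have hexp : ((1-p)*α+p*(1-β)) * (1 - c/d)
            = ((1-p)*α+p*(1-β)) - ((1-p)*α+p*(1-β)) * (c/d) := by ring
        rw [hexp]; nlinarith [h1]
      · -- 1 - q < A + B(1 - c/d), i.e. B c/d < B
        have h2 : ((1-p)*α+p*(1-β)) * (c/d) < ((1-p)*α+p*(1-β)) := by
          rw [← mul_div_assoc, div_lt_iff₀ hd]
          nlinarith [hB0, hcd]
        have hexp : ((1-p)*α+p*(1-β)) * (1 - c/d)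
            = ((1-p)*α+p*(1-β)) - ((1-p)*α+p*(1-β)) * (c/d) := by ring
        rw [hexp]; nlinarith [h2]
    exact lt_of_lt_of_le hstrict hle
end
end

section
/- Let (X,Y) have joint pmf P_{XY} on finite alphabets and let ν, μ ∈ (1, ∞). Then for every ε ≥ H_ν(X) − H_∞(X), g^{(ν,μ)}(P_{XY}, ε) ≥ (μ/(μ−1)) g^∞(P_{XY}, φ(ν,ε)) − (1/(μ−1)) H_∞(Y), where φ(ν,ε) := ε − H_ν(X) + H_∞(X). -/
noncomputable section

/-- Rényi entropy of order `ν ∈ (1, ∞)` of a pmf `p` on a finite alphabet (base-2 logs):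
`H_ν = (1/(1-ν)) log₂ (Σ_x p(x)^ν)`. -/
def renyiH (ν : ℝ) {m : ℕ} (p : Fin m → ℝ) : ℝ :=
  (1 / (1 - ν)) * Real.logb 2 (∑ x, p x ^ ν)

/-- Min-entropy `H_∞ = -log₂ max_x p(x)`. -/
def minEnt {m : ℕ} (p : Fin m → ℝ) : ℝ := - Real.logb 2 (⨆ x, p x)

/-- Arimoto's conditional entropy of order `ν ∈ (1, ∞)` for a joint pmf `P` on `X × Z`:
`H_ν^A(X|Z) = (ν/(1-ν)) log₂ ( Σ_z (Σ_x P(x,z)^ν)^{1/ν} )`. -/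
def arimotoCondEnt (ν : ℝ) {m k : ℕ} (P : Fin m → Fin k → ℝ) : ℝ :=
  (ν / (1 - ν)) * Real.logb 2 (∑ z, (∑ x, P x z ^ ν) ^ (1 / ν))

/-- Arimoto's mutual information of order `ν ∈ (1, ∞)`:
`I_ν^A(X;Z) = H_ν(X) - H_ν^A(X|Z)` (with `H_ν(X)` computed from the `X`-marginal). -/
def arimotoMI (ν : ℝ) {m k : ℕ} (P : Fin m → Fin k → ℝ) : ℝ :=
  renyiH ν (fun x => ∑ z, P x z) - arimotoCondEnt ν P

/-- The utility-privacy function of order `(ν, μ)` for `ν, μ ∈ (1, ∞)`: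
`g^{(ν,μ)}(P_{XY}, ε) = max { I_μ^A(Y;Z) : P_{Z|Y}, X–Y–Z, I_ν^A(X;Z) ≤ ε }`, the
maximum over channels to `Z ∈ {1,…,N+1}`, with joints
`P_{XZ}(x,z) = Σ_y P_{XY}(x,y) P_{Z|Y}(z|y)` and `P_{YZ}(y,z) = P_Y(y) P_{Z|Y}(z|y)`. -/
def gNuMu (ν μ : ℝ) {M N : ℕ} (P : Fin M → Fin N → ℝ) (ε : ℝ) : ℝ :=
  sSup {v : ℝ | ∃ F ∈ filtSet N,
    arimotoMI ν (fun x z => ∑ y, P x y * F y z) ≤ ε ∧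
    v = arimotoMI μ (fun y z => (∑ x, P x y) * F y z)}

/-- The order-`(∞,∞)` utility-privacy function
`g^∞(P_{XY}, ε) = max { log₂(P_c(Y|Z)/P_c(Y)) : P_{Z|Y}, X–Y–Z, log₂(P_c(X|Z)/P_c(X)) ≤ ε }`,
using `I_∞^A(X;Z) = log₂(P_c(X|Z)/P_c(X))`. -/
def gInf {M N : ℕ} (P : Fin M → Fin N → ℝ) (ε : ℝ) : ℝ :=
  sSup {v : ℝ | ∃ F ∈ filtSet N,
    Real.logb 2 (privP P F / pcX P) ≤ ε ∧
    v = Real.logb 2 (privU P F / pcY P)}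

private lemma logb_rpow' {x : ℝ} (hx : 0 < x) (y : ℝ) :
    Real.logb 2 (x ^ y) = y * Real.logb 2 x := by
  rw [Real.logb, Real.logb, Real.log_rpow hx, mul_div_assoc]

private lemma csup_exists {m : ℕ} (hm : 0 < m) (f : Fin m → ℝ) :
    ∃ i, (⨆ j, f j) = f i ∧ ∀ j, f j ≤ f i := by
  have : Nonempty (Fin m) := Fin.pos_iff_nonempty.mp hm
  obtain ⟨i, hi⟩ := Finite.exists_max f
  exact ⟨i, le_antisymm (ciSup_le hi) (le_ciSup (Set.Finite.bddAbove (Set.finite_range f)) i), hi⟩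

private lemma exists_pos {m : ℕ} (p : Fin m → ℝ) (h1 : ∑ x, p x = 1) : ∃ x, 0 < p x := by
  by_contra h
  push_neg at h
  have : ∑ x, p x ≤ 0 := Finset.sum_nonpos (fun x _ => h x)
  linarith

private lemma exists_pos2 {m k : ℕ} (W : Fin m → Fin k → ℝ) (h1 : ∑ z, ∑ x, W x z = 1) :
    ∃ x z, 0 < W x z := by
  by_contra h; push_neg at h
  have : ∑ z, ∑ x, W x z ≤ 0 :=
    Finset.sum_nonpos fun z _ => Finset.sum_nonpos fun x _ => h x z
  linarith

private lemma rpow_le_aux {μ p c : ℝ} (hμ : 1 < μ) (hp : 0 ≤ p) (hpc : p ≤ c) :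
    p ^ μ ≤ c ^ (μ - 1) * p := by
  rcases hp.eq_or_lt with h | h
  · rw [← h, Real.zero_rpow (by positivity : μ ≠ 0), mul_zero]
  · have he := Real.rpow_add h (μ - 1) 1
    rw [sub_add_cancel, Real.rpow_one] at he
    rw [he]
    exact mul_le_mul_of_nonneg_right
      (Real.rpow_le_rpow hp hpc (by linarith)) h.le

private lemma renyiH_le_minEnt_mul {m : ℕ} (hm : 0 < m) (μ : ℝ) (hμ : 1 < μ)
    (p : Fin m → ℝ) (hp0 : ∀ x, 0 ≤ p x) (hp1 : ∑ x, p x = 1) :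
    renyiH μ p ≤ μ / (μ - 1) * minEnt p := by
  obtain ⟨i, hieq, hile⟩ := csup_exists hm p
  obtain ⟨j, hj⟩ := exists_pos p hp1
  have hc : 0 < ⨆ x, p x := hieq ▸ lt_of_lt_of_le hj (hile j)
  have hS : (⨆ x, p x) ^ μ ≤ ∑ x, p x ^ μ := by
    rw [hieq]
    exact Finset.single_le_sum (fun x _ => Real.rpow_nonneg (hp0 x) μ) (Finset.mem_univ i)
  have hSpos : 0 < (⨆ x, p x) ^ μ := Real.rpow_pos_of_pos hc μ
  have hlog : μ * Real.logb 2 (⨆ x, p x) ≤ Real.logb 2 (∑ x, p x ^ μ) := by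
    rw [← logb_rpow' hc μ]
    exact Real.logb_le_logb_of_le one_lt_two hSpos hS
  have hk : (1 : ℝ) / (1 - μ) ≤ 0 := one_div_nonpos.mpr (by linarith)
  have key := mul_le_mul_of_nonpos_left hlog hk
  have heq : (1 / (1 - μ)) * (μ * Real.logb 2 (⨆ x, p x))
      = μ / (μ - 1) * (- Real.logb 2 (⨆ x, p x)) := by
    have h1 : μ - 1 ≠ 0 := by linarith
    have h2 : (1:ℝ) - μ ≠ 0 := by linarith
    field_simp
    ring
  unfold renyiH minEnt
  linarith [key, heq]

private lemma minEnt_le_renyiH {m : ℕ} (hm : 0 < m) (μ : ℝ) (hμ : 1 < μ)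
    (p : Fin m → ℝ) (hp0 : ∀ x, 0 ≤ p x) (hp1 : ∑ x, p x = 1) :
    minEnt p ≤ renyiH μ p := by
  obtain ⟨i, hieq, hile⟩ := csup_exists hm p
  obtain ⟨j, hj⟩ := exists_pos p hp1
  have hc : 0 < ⨆ x, p x := hieq ▸ lt_of_lt_of_le hj (hile j)
  have hSpos : 0 < ∑ x, p x ^ μ :=
    Finset.sum_pos' (fun x _ => Real.rpow_nonneg (hp0 x) μ)
      ⟨j, Finset.mem_univ j, Real.rpow_pos_of_pos hj μ⟩
  have hS : ∑ x, p x ^ μ ≤ (⨆ x, p x) ^ (μ - 1) := by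
    calc ∑ x, p x ^ μ ≤ ∑ x, (⨆ x, p x) ^ (μ - 1) * p x :=
          Finset.sum_le_sum fun x _ => rpow_le_aux hμ (hp0 x) (hieq ▸ hile x)
      _ = (⨆ x, p x) ^ (μ - 1) := by rw [← Finset.mul_sum, hp1, mul_one]
  have hlog : Real.logb 2 (∑ x, p x ^ μ) ≤ (μ - 1) * Real.logb 2 (⨆ x, p x) := by
    rw [← logb_rpow' hc (μ - 1)]
    exact Real.logb_le_logb_of_le one_lt_two hSpos hS
  have hk : (1 : ℝ) / (1 - μ) ≤ 0 := one_div_nonpos.mpr (by linarith)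
  have key := mul_le_mul_of_nonpos_left hlog hk
  have heq : (1 / (1 - μ)) * ((μ - 1) * Real.logb 2 (⨆ x, p x))
      = - Real.logb 2 (⨆ x, p x) := by
    have h2 : (1:ℝ) - μ ≠ 0 := by linarith
    field_simp
    ring
  unfold renyiH minEnt
  linarith [key, heq]


private lemma inner_sum_nonneg {m k : ℕ} (ν : ℝ) (W : Fin m → Fin k → ℝ)
    (hW0 : ∀ x z, 0 ≤ W x z) (z : Fin k) : 0 ≤ ∑ x, W x z ^ ν :=
  Finset.sum_nonneg fun x _ => Real.rpow_nonneg (hW0 x z) ν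

private lemma condEnt_nonneg {m k : ℕ} (μ : ℝ) (hμ : 1 < μ)
    (W : Fin m → Fin k → ℝ) (hW0 : ∀ x z, 0 ≤ W x z)
    (hW1 : ∑ z, ∑ x, W x z = 1) :
    0 ≤ arimotoCondEnt μ W := by
  have hμ0 : μ ≠ 0 := by positivity
  have hterm : ∀ z, (∑ x, W x z ^ μ) ^ (1/μ) ≤ ∑ x, W x z := by
    intro z
    set t := ∑ x, W x z with ht
    have ht0 : 0 ≤ t := Finset.sum_nonneg fun x _ => hW0 x z
    have h1 : ∑ x, W x z ^ μ ≤ t ^ μ := by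
      calc ∑ x, W x z ^ μ ≤ ∑ x, t ^ (μ - 1) * W x z :=
            Finset.sum_le_sum fun x _ => rpow_le_aux hμ (hW0 x z)
              (Finset.single_le_sum (fun x' _ => hW0 x' z) (Finset.mem_univ x))
        _ = t ^ (μ - 1) * t := by rw [← Finset.mul_sum]
        _ = t ^ μ := by
            rcases ht0.eq_or_lt with h | h
            · rw [← h, Real.zero_rpow (by linarith : μ - 1 ≠ 0),
                Real.zero_rpow hμ0, zero_mul]
            · have he := Real.rpow_add h (μ - 1) 1
              rw [sub_add_cancel, Real.rpow_one] at he
              exact he.symm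
    calc (∑ x, W x z ^ μ) ^ (1/μ) ≤ (t ^ μ) ^ (1/μ) :=
          Real.rpow_le_rpow (inner_sum_nonneg μ W hW0 z) h1 (by positivity)
      _ = t := by
          rw [← Real.rpow_mul ht0, mul_one_div_cancel hμ0, Real.rpow_one]
  have hS1 : ∑ z, (∑ x, W x z ^ μ) ^ (1/μ) ≤ 1 := by
    calc ∑ z, (∑ x, W x z ^ μ) ^ (1/μ) ≤ ∑ z, ∑ x, W x z :=
          Finset.sum_le_sum fun z _ => hterm z
      _ = 1 := hW1
  have hS0 : 0 ≤ ∑ z, (∑ x, W x z ^ μ) ^ (1/μ) :=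
    Finset.sum_nonneg fun z _ => Real.rpow_nonneg (inner_sum_nonneg μ W hW0 z) _
  have hlog : Real.logb 2 (∑ z, (∑ x, W x z ^ μ) ^ (1/μ)) ≤ 0 :=
    Real.logb_nonpos one_lt_two hS0 hS1
  have hk : μ / (1 - μ) ≤ 0 := by
    apply div_nonpos_of_nonneg_of_nonpos <;> linarith
  unfold arimotoCondEnt
  nlinarith [hk, hlog]

private lemma condEnt_le {m k : ℕ} (hm : 0 < m) (μ : ℝ) (hμ : 1 < μ)
    (W : Fin m → Fin k → ℝ) (hW0 : ∀ x z, 0 ≤ W x z)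
    (hTpos : 0 < ∑ z, ⨆ x, W x z) :
    arimotoCondEnt μ W ≤ μ / (1 - μ) * Real.logb 2 (∑ z, ⨆ x, W x z) := by
  have hμ0 : μ ≠ 0 := by positivity
  have hterm : ∀ z, (⨆ x, W x z) ≤ (∑ x, W x z ^ μ) ^ (1/μ) := by
    intro z
    obtain ⟨i, hieq, _⟩ := csup_exists hm (fun x => W x z)
    rw [hieq]
    calc W i z = (W i z ^ μ) ^ (1/μ) := by
          rw [← Real.rpow_mul (hW0 i z), mul_one_div_cancel hμ0, Real.rpow_one]
      _ ≤ (∑ x, W x z ^ μ) ^ (1/μ) :=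
          Real.rpow_le_rpow (Real.rpow_nonneg (hW0 i z) μ)
            (Finset.single_le_sum (fun x _ => Real.rpow_nonneg (hW0 x z) μ)
              (Finset.mem_univ i)) (by positivity)
  have hTS : ∑ z, ⨆ x, W x z ≤ ∑ z, (∑ x, W x z ^ μ) ^ (1/μ) :=
    Finset.sum_le_sum fun z _ => hterm z
  have hlog := Real.logb_le_logb_of_le one_lt_two hTpos hTS
  have hk : μ / (1 - μ) ≤ 0 := by
    apply div_nonpos_of_nonneg_of_nonpos <;> linarith
  exact mul_le_mul_of_nonpos_left hlog hk

private lemma condEnt_ge {m k : ℕ} (hm : 0 < m) (ν : ℝ) (hν : 1 < ν)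
    (W : Fin m → Fin k → ℝ) (hW0 : ∀ x z, 0 ≤ W x z)
    (hW1 : ∑ z, ∑ x, W x z = 1)
    (hTpos : 0 < ∑ z, ⨆ x, W x z) :
    - Real.logb 2 (∑ z, ⨆ x, W x z) ≤ arimotoCondEnt ν W := by
  have hν0 : ν ≠ 0 := by positivity
  set T := ∑ z, ⨆ x, W x z with hTdef
  set θ : ℝ := 1 / ν with hθdef
  have hθ0 : 0 < θ := by positivity
  have hθ1 : θ < 1 := by
    rw [hθdef]; rw [div_lt_one (by linarith)]; linarith
  -- pointwise quantities
  have hm0 : ∀ z, 0 ≤ ⨆ x, W x z := by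
    intro z
    obtain ⟨i, hieq, _⟩ := csup_exists hm (fun x => W x z)
    rw [hieq]; exact hW0 i z
  have hq0 : ∀ z, 0 ≤ ∑ x, W x z := fun z => Finset.sum_nonneg fun x _ => hW0 x z
  -- Step A+B : (∑_x W^ν)^θ ≤ (⨆ W)^(1-θ) * (∑ W)^θ
  have hAB : ∀ z, (∑ x, W x z ^ ν) ^ θ ≤ (⨆ x, W x z) ^ (1 - θ) * (∑ x, W x z) ^ θ := by
    intro z
    obtain ⟨i, hieq, hile⟩ := csup_exists hm (fun x => W x z)
    have hA : ∑ x, W x z ^ ν ≤ (⨆ x, W x z) ^ (ν - 1) * ∑ x, W x z := by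
      calc ∑ x, W x z ^ ν ≤ ∑ x, (⨆ x, W x z) ^ (ν - 1) * W x z :=
            Finset.sum_le_sum fun x _ => rpow_le_aux hν (hW0 x z) (by rw [hieq]; exact hile x)
        _ = (⨆ x, W x z) ^ (ν - 1) * ∑ x, W x z := by rw [← Finset.mul_sum]
    calc (∑ x, W x z ^ ν) ^ θ ≤ ((⨆ x, W x z) ^ (ν - 1) * ∑ x, W x z) ^ θ :=
          Real.rpow_le_rpow (inner_sum_nonneg ν W hW0 z) hA hθ0.le
      _ = (⨆ x, W x z) ^ (1 - θ) * (∑ x, W x z) ^ θ := by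
          rw [Real.mul_rpow (Real.rpow_nonneg (hm0 z) _) (hq0 z),
            ← Real.rpow_mul (hm0 z)]
          congr 2
          rw [hθdef]; field_simp
  -- Step C : Hölder via weighted AM-GM
  have hC : ∑ z, (⨆ x, W x z) ^ (1 - θ) * (∑ x, W x z) ^ θ ≤ T ^ (1 - θ) := by
    have hgm : ∀ z, (⨆ x, W x z) ^ (1 - θ) * (∑ x, W x z) ^ θ
        ≤ T ^ (1 - θ) * ((1 - θ) * ((⨆ x, W x z) / T) + θ * (∑ x, W x z)) := by
      intro z
      have h1 : ((⨆ x, W x z) / T) ^ (1 - θ) * (∑ x, W x z) ^ θ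
          ≤ (1 - θ) * ((⨆ x, W x z) / T) + θ * (∑ x, W x z) :=
        Real.geom_mean_le_arith_mean2_weighted (by linarith) hθ0.le
          (div_nonneg (hm0 z) hTpos.le) (hq0 z) (by ring)
      have h2 : (⨆ x, W x z) ^ (1 - θ) * (∑ x, W x z) ^ θ
          = T ^ (1 - θ) * (((⨆ x, W x z) / T) ^ (1 - θ) * (∑ x, W x z) ^ θ) := by
        rw [Real.div_rpow (hm0 z) hTpos.le]
        field_simp
      rw [h2]
      exact mul_le_mul_of_nonneg_left h1 (Real.rpow_nonneg hTpos.le _)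
    calc ∑ z, (⨆ x, W x z) ^ (1 - θ) * (∑ x, W x z) ^ θ
        ≤ ∑ z, T ^ (1 - θ) * ((1 - θ) * ((⨆ x, W x z) / T) + θ * (∑ x, W x z)) :=
          Finset.sum_le_sum fun z _ => hgm z
      _ = T ^ (1 - θ) * ((1 - θ) * (T / T) + θ * 1) := by
          rw [← Finset.mul_sum]
          congr 1
          rw [Finset.sum_add_distrib, ← Finset.mul_sum, ← Finset.mul_sum,
            ← Finset.sum_div, hW1]
      _ = T ^ (1 - θ) := by
          rw [div_self hTpos.ne']
          ring
  -- combine: S ≤ T^(1-θ)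
  have hS : ∑ z, (∑ x, W x z ^ ν) ^ (1/ν) ≤ T ^ (1 - θ) :=
    le_trans (Finset.sum_le_sum fun z _ => hAB z) hC
  -- S > 0
  obtain ⟨x0, z0, hx0⟩ := exists_pos2 W hW1
  have hSpos : 0 < ∑ z, (∑ x, W x z ^ ν) ^ (1/ν) := by
    apply Finset.sum_pos'
    · exact fun z _ => Real.rpow_nonneg (inner_sum_nonneg ν W hW0 z) _
    · refine ⟨z0, Finset.mem_univ z0, Real.rpow_pos_of_pos ?_ _⟩
      exact lt_of_lt_of_le (Real.rpow_pos_of_pos hx0 ν)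
        (Finset.single_le_sum (fun x _ => Real.rpow_nonneg (hW0 x z0) ν)
          (Finset.mem_univ x0))
  have hlog : Real.logb 2 (∑ z, (∑ x, W x z ^ ν) ^ (1/ν)) ≤ (1 - θ) * Real.logb 2 T := by
    rw [← logb_rpow' hTpos]
    exact Real.logb_le_logb_of_le one_lt_two hSpos hS
  have hk : ν / (1 - ν) ≤ 0 := by
    apply div_nonpos_of_nonneg_of_nonpos <;> linarith
  have key := mul_le_mul_of_nonpos_left hlog hk
  have heq : ν / (1 - ν) * ((1 - θ) * Real.logb 2 T) = - Real.logb 2 T := by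
    rw [hθdef]
    have h1 : (1:ℝ) - ν ≠ 0 := by linarith
    field_simp
    ring
  unfold arimotoCondEnt
  linarith [key, heq]

/-- Lower bound on `g^{(ν,μ)}` via `g^∞`: for `ν, μ ∈ (1, ∞)` and every
`ε ≥ H_ν(X) - H_∞(X)`,
`g^{(ν,μ)}(P_{XY}, ε) ≥ (μ/(μ-1)) g^∞(P_{XY}, φ(ν,ε)) - (1/(μ-1)) H_∞(Y)`, where
`φ(ν,ε) = ε - H_ν(X) + H_∞(X)`. -/
theorem gNuMu_ge_gInf {M N : ℕ} (hM : 0 < M) (hN : 0 < N)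
    (P : Fin M → Fin N → ℝ) (hP : IsPmf P)
    (ν μ : ℝ) (hν : 1 < ν) (hμ : 1 < μ) (ε : ℝ)
    (hε : renyiH ν (fun x => ∑ y, P x y) - minEnt (fun x => ∑ y, P x y) ≤ ε) :
    gNuMu ν μ P ε ≥
      μ / (μ - 1) *
          gInf P (ε - renyiH ν (fun x => ∑ y, P x y) + minEnt (fun x => ∑ y, P x y))
        - (1 / (μ - 1)) * minEnt (fun y => ∑ x, P x y) := by
  classical
  haveI hNM : Nonempty (Fin M) := Fin.pos_iff_nonempty.mp hM
  haveI hNN : Nonempty (Fin N) := Fin.pos_iff_nonempty.mp hN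
  have hμ1 : (0:ℝ) < μ - 1 := by linarith
  have hμpos : (0:ℝ) < μ / (μ - 1) := by positivity
  have hP0 : ∀ x y, 0 ≤ P x y := hP.1
  have hpX1 : ∑ x, ∑ y, P x y = 1 := hP.2
  have hpY1 : ∑ y, ∑ x, P x y = 1 := by rw [Finset.sum_comm]; exact hP.2
  have hpX0 : ∀ x, 0 ≤ ∑ y, P x y := fun x => Finset.sum_nonneg fun y _ => hP0 x y
  have hpY0 : ∀ y, 0 ≤ ∑ x, P x y := fun y => Finset.sum_nonneg fun x _ => hP0 x y
  obtain ⟨x0, hx0⟩ := exists_pos (fun x => ∑ y, P x y) hpX1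
  obtain ⟨y0, hy0⟩ := exists_pos (fun y => ∑ x, P x y) hpY1
  obtain ⟨xm, hxmeq, hxmle⟩ := csup_exists hM (fun x => ∑ y, P x y)
  obtain ⟨ym, hymeq, hymle⟩ := csup_exists hN (fun y => ∑ x, P x y)
  have hpcX : pcX P = ∑ y, P xm y := hxmeq
  have hpcY : pcY P = ∑ x, P x ym := hymeq
  have hpcXpos : 0 < pcX P := by
    rw [hpcX]; exact lt_of_lt_of_le hx0 (hxmle x0)
  have hpcYpos : 0 < pcY P := by
    rw [hpcY]; exact lt_of_lt_of_le hy0 (hymle y0)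
  -- marginals of the induced joints
  have hQmarg : ∀ (F : Fin N → Fin (N+1) → ℝ), IsStoch F → ∀ x,
      ∑ z, ∑ y, P x y * F y z = ∑ y, P x y := by
    intro F hF x
    rw [Finset.sum_comm]
    simp_rw [← Finset.mul_sum]
    simp [hF.2]
  have hRmarg : ∀ (F : Fin N → Fin (N+1) → ℝ), IsStoch F → ∀ y,
      ∑ z, (∑ x, P x y) * F y z = ∑ x, P x y := by
    intro F hF y
    rw [← Finset.mul_sum, hF.2, mul_one]
  have hQ0 : ∀ (F : Fin N → Fin (N+1) → ℝ), IsStoch F → ∀ x z,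
      0 ≤ ∑ y, P x y * F y z := fun F hF x z =>
    Finset.sum_nonneg fun y _ => mul_nonneg (hP0 x y) (hF.1 y z)
  have hR0 : ∀ (F : Fin N → Fin (N+1) → ℝ), IsStoch F → ∀ y z,
      0 ≤ (∑ x, P x y) * F y z := fun F hF y z => mul_nonneg (hpY0 y) (hF.1 y z)
  have hQtot : ∀ (F : Fin N → Fin (N+1) → ℝ), IsStoch F →
      ∑ z, ∑ x, ∑ y, P x y * F y z = 1 := by
    intro F hF
    rw [Finset.sum_comm]
    simp_rw [hQmarg F hF]
    exact hpX1
  have hRtot : ∀ (F : Fin N → Fin (N+1) → ℝ), IsStoch F →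
      ∑ z, ∑ y, (∑ x, P x y) * F y z = 1 := by
    intro F hF
    rw [Finset.sum_comm]
    simp_rw [hRmarg F hF]
    exact hpY1
  -- positivity of the leakage terms
  have hprivPbound : ∀ (F : Fin N → Fin (N+1) → ℝ), IsStoch F → pcX P ≤ privP P F := by
    intro F hF
    rw [hpcX, ← hQmarg F hF xm]
    unfold privP
    apply Finset.sum_le_sum
    intro z _
    exact le_ciSup (f := fun x => ∑ y, P x y * F y z)
      (Set.Finite.bddAbove (Set.finite_range _)) xm
  have hprivUbound : ∀ (F : Fin N → Fin (N+1) → ℝ), IsStoch F → pcY P ≤ privU P F := by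
    intro F hF
    rw [hpcY, ← hRmarg F hF ym]
    unfold privU
    apply Finset.sum_le_sum
    intro z _
    exact le_ciSup (f := fun y => (∑ x, P x y) * F y z)
      (Set.Finite.bddAbove (Set.finite_range _)) ym
  have hprivPpos : ∀ (F : Fin N → Fin (N+1) → ℝ), IsStoch F → 0 < privP P F :=
    fun F hF => lt_of_lt_of_le hpcXpos (hprivPbound F hF)
  have hprivUpos : ∀ (F : Fin N → Fin (N+1) → ℝ), IsStoch F → 0 < privU P F :=
    fun F hF => lt_of_lt_of_le hpcYpos (hprivUbound F hF)
  set Φ : ℝ := ε - renyiH ν (fun x => ∑ y, P x y) + minEnt (fun x => ∑ y, P x y) with hΦdef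
  -- feasibility transfer
  have hfeas : ∀ (F : Fin N → Fin (N+1) → ℝ), IsStoch F →
      Real.logb 2 (privP P F / pcX P) ≤ Φ →
      arimotoMI ν (fun x z => ∑ y, P x y * F y z) ≤ ε := by
    intro F hF hpriv
    have hge : - Real.logb 2 (privP P F)
        ≤ arimotoCondEnt ν (fun x z => ∑ y, P x y * F y z) :=
      condEnt_ge hM ν hν _ (hQ0 F hF) (hQtot F hF) (hprivPpos F hF)
    have hdiv : Real.logb 2 (privP P F / pcX P)
        = Real.logb 2 (privP P F) - Real.logb 2 (pcX P) :=
      Real.logb_div (hprivPpos F hF).ne' hpcXpos.ne'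
    have hmarg : (fun x => ∑ z, ∑ y, P x y * F y z) = (fun x => ∑ y, P x y) :=
      funext (hQmarg F hF)
    have hminEnt : minEnt (fun x => ∑ y, P x y) = - Real.logb 2 (pcX P) := rfl
    unfold arimotoMI
    rw [hmarg]
    rw [hΦdef] at hpriv
    linarith [hge, hdiv, hpriv, hminEnt]
  -- utility transfer
  have hutil : ∀ (F : Fin N → Fin (N+1) → ℝ), IsStoch F →
      μ / (μ - 1) * Real.logb 2 (privU P F / pcY P)
          - (1/(μ-1)) * minEnt (fun y => ∑ x, P x y)
        ≤ arimotoMI μ (fun y z => (∑ x, P x y) * F y z) := by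
    intro F hF
    have hUpos := hprivUpos F hF
    have hle : arimotoCondEnt μ (fun y z => (∑ x, P x y) * F y z)
        ≤ μ / (1 - μ) * Real.logb 2 (privU P F) :=
      condEnt_le hN μ hμ _ (hR0 F hF) hUpos
    have hH : minEnt (fun y => ∑ x, P x y) ≤ renyiH μ (fun y => ∑ x, P x y) :=
      minEnt_le_renyiH hN μ hμ _ hpY0 hpY1
    have hmarg : (fun y => ∑ z, (∑ x, P x y) * F y z) = (fun y => ∑ x, P x y) :=
      funext (hRmarg F hF)
    have hdiv : Real.logb 2 (privU P F / pcY P)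
        = Real.logb 2 (privU P F) - Real.logb 2 (pcY P) :=
      Real.logb_div hUpos.ne' hpcYpos.ne'
    have hminEnt : minEnt (fun y => ∑ x, P x y) = - Real.logb 2 (pcY P) := rfl
    have key : μ / (μ - 1) * Real.logb 2 (privU P F / pcY P)
          - (1/(μ-1)) * minEnt (fun y => ∑ x, P x y)
        = - (μ / (1 - μ) * Real.logb 2 (privU P F)) - Real.logb 2 (pcY P) := by
      rw [hdiv, hminEnt]
      have h1 : μ - 1 ≠ 0 := by linarith
      have h2 : (1:ℝ) - μ ≠ 0 := by linarith
      field_simp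
      ring
    rw [key]
    unfold arimotoMI
    rw [hmarg]
    linarith [hle, hH, hminEnt]
  -- the two constraint sets
  set S2 : Set ℝ := {v : ℝ | ∃ F ∈ filtSet N,
    arimotoMI ν (fun x z => ∑ y, P x y * F y z) ≤ ε ∧
    v = arimotoMI μ (fun y z => (∑ x, P x y) * F y z)} with hS2def
  set S1 : Set ℝ := {v : ℝ | ∃ F ∈ filtSet N,
    Real.logb 2 (privP P F / pcX P) ≤ Φ ∧
    v = Real.logb 2 (privU P F / pcY P)} with hS1def
  have hgN : gNuMu ν μ P ε = sSup S2 := rfl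
  have hgI : gInf P Φ = sSup S1 := rfl
  -- S2 is bounded above
  have hub : ∀ w ∈ S2, w ≤ μ/(μ-1) * minEnt (fun y => ∑ x, P x y) := by
    rintro w ⟨F, hF, -, rfl⟩
    have h0 : 0 ≤ arimotoCondEnt μ (fun y z => (∑ x, P x y) * F y z) :=
      condEnt_nonneg μ hμ _ (hR0 F hF) (hRtot F hF)
    have hH : renyiH μ (fun y => ∑ x, P x y)
        ≤ μ/(μ-1) * minEnt (fun y => ∑ x, P x y) :=
      renyiH_le_minEnt_mul hN μ hμ _ hpY0 hpY1
    have hmarg : (fun y => ∑ z, (∑ x, P x y) * F y z) = (fun y => ∑ x, P x y) :=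
      funext (hRmarg F hF)
    unfold arimotoMI
    rw [hmarg]
    linarith
  have hbdd : BddAbove S2 := ⟨_, fun w hw => hub w hw⟩
  -- S1 is nonempty
  have hS1ne : S1.Nonempty := by
    have hF0 : IsStoch (fun (_ : Fin N) (z : Fin (N+1)) => if z = 0 then (1:ℝ) else 0) := by
      constructor
      · intro y z; dsimp only; split <;> norm_num
      · intro y; dsimp only; simp
    refine ⟨_, (fun (_ : Fin N) (z : Fin (N+1)) => if z = 0 then (1:ℝ) else 0), hF0, ?_, rfl⟩
    have hpp : privP P (fun (_ : Fin N) (z : Fin (N+1)) => if z = 0 then (1:ℝ) else 0) = pcX P := by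
      unfold privP
      have h1 : ∀ z : Fin (N+1),
          (⨆ x, ∑ y, P x y * (if z = 0 then (1:ℝ) else 0))
            = if z = 0 then pcX P else 0 := by
        intro z
        split
        · simp [pcX]
        · simp [ciSup_const]
      simp_rw [h1]
      simp
    rw [hpp, div_self hpcXpos.ne', Real.logb_one, hΦdef]
    linarith [hε]
  -- conclude
  rw [ge_iff_le, hgN, hgI]
  have hS2sup : ∀ v ∈ S1,
      μ/(μ-1) * v - (1/(μ-1)) * minEnt (fun y => ∑ x, P x y) ≤ sSup S2 := by
    rintro v ⟨F, hF, hpriv, rfl⟩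
    have hmem : arimotoMI μ (fun y z => (∑ x, P x y) * F y z) ∈ S2 :=
      ⟨F, hF, hfeas F hF hpriv, rfl⟩
    exact le_trans (hutil F hF) (le_csSup hbdd hmem)
  have hsup1 : sSup S1 ≤
      (sSup S2 + (1/(μ-1)) * minEnt (fun y => ∑ x, P x y)) / (μ/(μ-1)) := by
    apply csSup_le hS1ne
    intro v hv
    rw [le_div_iff₀ hμpos]
    have h := hS2sup v hv
    linarith [h]
  have hcancel : (μ/(μ-1)) *
      ((sSup S2 + (1/(μ-1)) * minEnt (fun y => ∑ x, P x y)) / (μ/(μ-1)))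
      = sSup S2 + (1/(μ-1)) * minEnt (fun y => ∑ x, P x y) := by
    field_simp
  have h := mul_le_mul_of_nonneg_left hsup1 hμpos.le
  rw [hcancel] at h
  linarith [h]
end
end
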